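/- Write ρ1 = A1·w + B1 and ρ2 = A2·w + B2 as polynomials in w, where A1 = −z² + p67·z + p47, B1 = p77·z⁴ + p57·z³ + p37·z² + p27·z + p17, A2 = (p66 − p677)·z + (p46 − p477), B2 = −2z⁵ + (p67 − p777 − λ7)z⁴ + (p56 − p577)z³ + (p36 − p377)z² + (p26 − p277)z + (p16 − p177). Then the resultant of ρ1 and ρ2 with respect to w satisfies the identity A1·B2 − A2·B1 = ρ12 in R[z], where ρ12 = 2z⁷ + (λ7 − 3p67 + p777)z⁶ + (p77p677 − p77p66 − 2p47 − p777p67 − p67λ7 + p67² + p577 − p56)z⁵ + (p377 − p77p46 + p77p477 − p47λ7 + p57p677 + p67p47 + p56p67 − p777p47 − p57p66 − p577p67 − p36)z⁴ + (p277 − p377p67 − p26 − p37p66 + p36p67 − p577p47 + p57p477 + p56p47 − p57p46 + p37p677)z³ + (p36p47 − p377p47 + p27p677 + p177 − p16 + p26p67 + p37p477 − p37p46 − p27p66 − p277p67)z² + (p17p677 − p27p46 + p27p477 + p26p47 − p177p67 + p16p67 − p277p47 − p17p66)z − p177p47 + p16p47 − p17p46 + p17p477. Consequently, for any commutative ring S,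 any ring homomorphism R → S, and any elements z, w ∈ S with ρ1(z,w) = 0 and ρ2(z,w) = 0, the element ρ12(z) is 0. -/

import Mathlib

/-- The degree-seven resultant polynomial `ρ12` arising from the Kleinian formula for the
cyclic (3,8)-curve, with the curve constant `λ7` and the 2- and 3-index ℘-values as
parameters. -/
def rho12 {S : Type*} [CommRing S]
    (l7 p17 p27 p37 p47 p57 p67 p77 p16 p26 p36 p46 p56 p66
     p177 p277 p377 p477 p577 p677 p777 z : S) : S :=
  2 * z ^ 7 + (l7 - 3 * p67 + p777) * z ^ 6
    + (p77 * p677 - p77 * p66 - 2 * p47 - p777 * p67 - p67 * l7 + p67 ^ 2 + p577 - p56) * z ^ 5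
    + (p377 - p77 * p46 + p77 * p477 - p47 * l7 + p57 * p677 + p67 * p47 + p56 * p67
        - p777 * p47 - p57 * p66 - p577 * p67 - p36) * z ^ 4
    + (p277 - p377 * p67 - p26 - p37 * p66 + p36 * p67 - p577 * p47 + p57 * p477
        + p56 * p47 - p57 * p46 + p37 * p677) * z ^ 3
    + (p36 * p47 - p377 * p47 + p27 * p677 + p177 - p16 + p26 * p67 + p37 * p477
        - p37 * p46 - p27 * p66 - p277 * p67) * z ^ 2
    + (p17 * p677 - p27 * p46 + p27 * p477 + p26 * p47 - p177 * p67 + p16 * p67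
        - p277 * p47 - p17 * p66) * z
    - p177 * p47 + p16 * p47 - p17 * p46 + p17 * p477

/-- with `ρ1 = A1·w + B1`, `ρ2 = A2·w + B2` for the (3,8)-curve, the resultant
identity `A1·B2 − A2·B1 = ρ12` holds, and consequently for any commutative ring `S` and any
values `z, w` with `ρ1(z,w) = 0` and `ρ2(z,w) = 0` one has `ρ12(z) = 0`. -/
theorem stmt_1 {S : Type*} [CommRing S]
    (l7 p17 p27 p37 p47 p57 p67 p77 p16 p26 p36 p46 p56 p66
     p177 p277 p377 p477 p577 p677 p777 z w : S) :
    ((-z ^ 2 + p67 * z + p47) *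
        (-2 * z ^ 5 + (p67 - p777 - l7) * z ^ 4 + (p56 - p577) * z ^ 3
          + (p36 - p377) * z ^ 2 + (p26 - p277) * z + (p16 - p177))
      - ((p66 - p677) * z + (p46 - p477)) *
        (p77 * z ^ 4 + p57 * z ^ 3 + p37 * z ^ 2 + p27 * z + p17)
      = rho12 l7 p17 p27 p37 p47 p57 p67 p77 p16 p26 p36 p46 p56 p66
          p177 p277 p377 p477 p577 p677 p777 z)
    ∧
    ((p77 * z ^ 4 + p57 * z ^ 3 + (p37 - w) * z ^ 2 + (p67 * w + p27) * z + p47 * w + p17 = 0) →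
      (-2 * z ^ 5 + (p67 - p777 - l7) * z ^ 4 + (p56 - p577) * z ^ 3 + (p36 - p377) * z ^ 2
          + ((p66 - p677) * w - p277 + p26) * z + (p46 - p477) * w - p177 + p16 = 0) →
      rho12 l7 p17 p27 p37 p47 p57 p67 p77 p16 p26 p36 p46 p56 p66
          p177 p277 p377 p477 p577 p677 p777 z = 0) := by
  constructor
  · unfold rho12
    ring
  · intro h₁ h₂
    unfold rho12
    linear_combination (-z ^ 2 + p67 * z + p47) * h₂ - ((p66 - p677) * z + (p46 - p477)) * h₁
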